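/- Let C be integrable with P(C ≥ η) > 0 and E[C | C ≥ η] = δ > 0. If additionally P(C ≥ η, C < 0) > 0, then the rule D = 1{C ≥ max(η, 0)} satisfies both E[C | D = 1] ≥ δ and C ≥ 0 on {D = 1}, and P(D = 1) < P(C ≥ η). -/

import Mathlib

/-!
A patient with `η ≤ C < 0` exists, so `η < 0` and the truncated rule selects `{0 ≤ C}`. Passing
from `{η ≤ C}` to `{0 ≤ C}` discards only patients with `C < 0`: this cannot decrease the
integral of `C` and, when the discarded mass is positive, strictly decreases the measure, so a
positive conditional mean can only go up.
-/

open MeasureTheory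

/-- Conditional mean of `C` given the event `{C ≥ t}`. -/
noncomputable def condMeanGe {Ω : Type*} [MeasurableSpace Ω] (μ : Measure Ω)
    (C : Ω → ℝ) (t : ℝ) : ℝ :=
  (∫ ω in {ω | t ≤ C ω}, C ω ∂μ) / (μ {ω | t ≤ C ω}).toReal

section SetAverage

variable {α : Type*} [MeasurableSpace α] {μ : Measure α} {f : α → ℝ} {s t : Set α}

theorem setAverage_le_setAverage_of_nonpos_on_sdiff (ht : NullMeasurableSet t μ) (hts : t ⊆ s)
    (hf : IntegrableOn f s μ) (hpos : 0 < ⨍ x in s, f x ∂μ)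
    (hf_nonpos : ∀ᵐ x ∂μ.restrict (s \ t), f x ≤ 0) :
    ⨍ x in s, f x ∂μ ≤ ⨍ x in t, f x ∂μ := by
  have hint : ∫ x in s, f x ∂μ ≤ ∫ x in t, f x ∂μ := by
    have := integral_nonpos_of_ae hf_nonpos
    rw [setIntegral_sdiff₀ ht hf hts] at this
    linarith
  rw [setAverage_eq, smul_eq_mul] at hpos
  obtain ⟨hs_pos, hint_s_pos⟩ : 0 < μ.real s ∧ 0 < ∫ x in s, f x ∂μ := by
    rcases pos_and_pos_or_neg_and_neg_of_mul_pos hpos with h | ⟨h, -⟩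
    · exact ⟨inv_pos.mp h.1, h.2⟩
    · exact absurd (inv_lt_zero.mp h) measureReal_nonneg.not_gt
  have hs_fin : μ s ≠ ⊤ := (ENNReal.toReal_pos_iff.mp hs_pos).2.ne
  have ht_pos : 0 < μ.real t := by
    refine ENNReal.toReal_pos (fun h0 => ?_) (measure_ne_top_of_subset hts hs_fin)
    linarith [setIntegral_measure_zero f h0]
  rw [setAverage_eq, setAverage_eq, smul_eq_mul, smul_eq_mul, ← div_eq_inv_mul,
    ← div_eq_inv_mul]
  calc (∫ x in s, f x ∂μ) / μ.real s
      ≤ (∫ x in t, f x ∂μ) / μ.real s := div_le_div_of_nonneg_right hint hs_pos.le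
    _ ≤ (∫ x in t, f x ∂μ) / μ.real t :=
      div_le_div_of_nonneg_left (by linarith) ht_pos (measureReal_mono hts hs_fin)

end SetAverage

theorem condMeanGe_eq_setAverage {Ω : Type*} [MeasurableSpace Ω] (μ : Measure Ω) (C : Ω → ℝ)
    (t : ℝ) : condMeanGe μ C t = ⨍ ω in {ω | t ≤ C ω}, C ω ∂μ := by
  rw [setAverage_eq, smul_eq_mul, condMeanGe, div_eq_inv_mul, measureReal_def]

theorem truncation_at_zero_general {Ω : Type*} [MeasurableSpace Ω] (μ : Measure Ω)
    [IsProbabilityMeasure μ] (C : Ω → ℝ) (hCmeas : Measurable C) (hC : Integrable C μ)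
    (δ η : ℝ) (hδ : 0 < δ)
    (hmean : condMeanGe μ C η = δ)
    (hneg : 0 < μ ({ω | η ≤ C ω} ∩ {ω | C ω < 0})) :
    δ ≤ condMeanGe μ C (max η 0) ∧
    (∀ ω, max η 0 ≤ C ω → 0 ≤ C ω) ∧
    μ {ω | max η 0 ≤ C ω} < μ {ω | η ≤ C ω} := by
  obtain ⟨ω₀, hηω₀, hω₀⟩ := nonempty_of_measure_ne_zero hneg.ne'
  have hη_nonpos : η ≤ 0 := hηω₀.trans hω₀.le
  have hsub : {ω | 0 ≤ C ω} ⊆ {ω | η ≤ C ω} := fun _ h => hη_nonpos.trans h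
  have hmeas (t : ℝ) : MeasurableSet {ω | t ≤ C ω} := measurableSet_le measurable_const hCmeas
  have hsdiff : {ω | η ≤ C ω} \ {ω | 0 ≤ C ω} = {ω | η ≤ C ω} ∩ {ω | C ω < 0} := by
    ext ω
    simp only [Set.mem_sdiff, Set.mem_inter_iff, Set.mem_ofPred_eq, not_le]
  rw [max_eq_right hη_nonpos]
  refine ⟨?_, fun ω h => h, ?_⟩
  · rw [condMeanGe_eq_setAverage] at hmean ⊢
    rw [← hmean]
    refine setAverage_le_setAverage_of_nonpos_on_sdiff (hmeas 0).nullMeasurableSet hsub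
      hC.integrableOn (hmean ▸ hδ) (ae_restrict_of_forall_mem ((hmeas η).diff (hmeas 0)) ?_)
    exact fun ω hω => (not_le.mp hω.2).le
  · rw [← tsub_pos_iff_lt, ← measure_sdiff hsub (hmeas 0).nullMeasurableSet (measure_ne_top _ _),
      hsdiff]
    exact hneg

/-- Multiple-constraint extension (γ = 0): truncating the cut point at `0`, i.e. using
the rule `D = 1{C ≥ max(η, 0)}`, preserves the mean constraint `E[C | D=1] ≥ δ`,
enforces `C ≥ 0` on the selected subgroup, and strictly shrinks the selected
proportion whenever patients with negative effects would otherwise be included. -/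
theorem truncation_at_zero {Ω : Type*} [MeasurableSpace Ω] (μ : Measure Ω)
    [IsProbabilityMeasure μ] (C : Ω → ℝ) (hCmeas : Measurable C) (hC : Integrable C μ)
    (δ η : ℝ) (hδ : 0 < δ)
    (hη : 0 < μ {ω | η ≤ C ω}) (hmean : condMeanGe μ C η = δ)
    (hneg : 0 < μ ({ω | η ≤ C ω} ∩ {ω | C ω < 0})) :
    δ ≤ condMeanGe μ C (max η 0) ∧
    (∀ ω, max η 0 ≤ C ω → 0 ≤ C ω) ∧
    μ {ω | max η 0 ≤ C ω} < μ {ω | η ≤ C ω} :=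
  truncation_at_zero_general μ C hCmeas hC δ η hδ hmean hneg
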